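/- arXiv:1112.1244 — 2 statements merged into one kernel-verified Lean document; each statement's English description precedes it below -/
import Mathlib

section
/- Let C be a code in H(m,q) with minimum distance δ = 4 and alphabet size q ≥ 3. Then every automorphism y of H(m,q) with y(Γ1(C)) = Γ1(C) satisfies y(C) = C. -/
open Set

variable {m : ℕ} {Q : Type*}

/-- An automorphism of the Hamming graph `H(m,q)`: a bijection of the vertex
set `Q^m` (given as an `Equiv`) preserving Hamming distance. -/
def IsHammingAut [DecidableEq Q] (f : (Fin m → Q) ≃ (Fin m → Q)) : Prop :=
  ∀ a b : Fin m → Q, hammingDist (f a) (f b) = hammingDist a b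

/-- The set of neighbours `Γ₁(C)` of a code `C` in `H(m,q)`. -/
def Nbrs [DecidableEq Q] (C : Set (Fin m → Q)) : Set (Fin m → Q) :=
  {ν | ν ∉ C ∧ ∃ α ∈ C, hammingDist ν α = 1}

/-- The code `C` has minimum distance `δ`. -/
def IsMinDist [DecidableEq Q] (C : Set (Fin m → Q)) (δ : ℕ) : Prop :=
  (∀ a ∈ C, ∀ b ∈ C, a ≠ b → δ ≤ hammingDist a b) ∧
  ∃ a ∈ C, ∃ b ∈ C, a ≠ b ∧ hammingDist a b = δ

/-- The neighbours `Γ₁(β)` of a single vertex `β`. -/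
def Sph [DecidableEq Q] (β : Fin m → Q) : Set (Fin m → Q) :=
  {ν | hammingDist β ν = 1}

/-- The set `Pre(α, y)` of pre-codewords of `α` with respect to `y`. -/
def Pre [DecidableEq Q] (C : Set (Fin m → Q)) (α : Fin m → Q)
    (y : (Fin m → Q) ≃ (Fin m → Q)) : Set (Fin m → Q) :=
  {π | hammingDist α π = 2 ∧ y π ∈ C}

/-- The set `C(π)` of codewords `β` with `d(β,π) = 2` admitting a common
neighbour `ν` with `π`. -/
def CSet [DecidableEq Q] (C : Set (Fin m → Q)) (π : Fin m → Q) : Set (Fin m → Q) :=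
  {β | β ∈ C ∧ hammingDist β π = 2 ∧ ∃ ν, hammingDist β ν = 1 ∧ hammingDist ν π = 1}

private lemma hd_pair [DecidableEq Q] {x y : Fin m → Q} {i j : Fin m} (hij : i ≠ j)
    (hi : x i ≠ y i) (hj : x j ≠ y j) (hk : ∀ k, k ≠ i → k ≠ j → x k = y k) :
    hammingDist x y = 2 := by
  have hset : (Finset.univ.filter fun k => x k ≠ y k) = {i, j} := by
    ext k
    simp only [Finset.mem_filter, Finset.mem_univ, true_and, Finset.mem_insert,
      Finset.mem_singleton]
    constructor
    · intro h
      by_contra hc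
      push_neg at hc
      exact h (hk k hc.1 hc.2)
    · rintro (rfl | rfl) <;> assumption
  show (Finset.univ.filter fun k => x k ≠ y k).card = 2
  rw [hset, Finset.card_insert_of_notMem (by simp [hij]), Finset.card_singleton]

private lemma hd_two [DecidableEq Q] {x y : Fin m → Q} (h : hammingDist x y = 2) :
    ∃ i j, i ≠ j ∧ x i ≠ y i ∧ x j ≠ y j ∧ ∀ k, k ≠ i → k ≠ j → x k = y k := by
  have h' : (Finset.univ.filter fun k => x k ≠ y k).card = 2 := h
  obtain ⟨i, j, hij, hs⟩ := Finset.card_eq_two.mp h'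
  have hi : x i ≠ y i := by
    have hii : i ∈ Finset.univ.filter fun k => x k ≠ y k := by rw [hs]; simp
    simpa using hii
  have hj : x j ≠ y j := by
    have hjj : j ∈ Finset.univ.filter fun k => x k ≠ y k := by rw [hs]; simp
    simpa using hjj
  refine ⟨i, j, hij, hi, hj, ?_⟩
  intro k hki hkj
  by_contra hc
  have hkk : k ∈ Finset.univ.filter fun k => x k ≠ y k := by simp [hc]
  rw [hs] at hkk
  simp only [Finset.mem_insert, Finset.mem_singleton] at hkk
  tauto

private lemma hd_update [DecidableEq Q] (x : Fin m → Q) (i : Fin m) {c : Q} (h : c ≠ x i) :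
    hammingDist x (Function.update x i c) = 1 := by
  have hset : (Finset.univ.filter fun k => x k ≠ Function.update x i c k) = {i} := by
    ext k
    simp only [Finset.mem_filter, Finset.mem_univ, true_and, Finset.mem_singleton,
      Function.update_apply]
    by_cases hk : k = i
    · subst hk; simp [Ne.symm h]
    · simp [hk]
  show (Finset.univ.filter fun k => x k ≠ Function.update x i c k).card = 1
  rw [hset, Finset.card_singleton]

private lemma exists_third [DecidableEq Q] [Fintype Q] (hq : 3 ≤ Fintype.card Q) (a b : Q) :
    ∃ c, c ≠ a ∧ c ≠ b := by
  by_contra hc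
  push_neg at hc
  have hsub : (Finset.univ : Finset Q) ⊆ {a, b} := by
    intro c _
    rcases eq_or_ne c a with rfl | h
    · simp
    · simp [hc c h]
  have := Finset.card_le_card hsub
  have h2 : ({a, b} : Finset Q).card ≤ 2 := by
    refine le_trans (Finset.card_insert_le _ _) ?_
    simp
  rw [Finset.card_univ] at this
  omega

/-- a code with minimum distance 4 over an alphabet of size at
least 3 is fixed setwise by every automorphism stabilising its neighbour set. -/
theorem stmt_12 [DecidableEq Q] [Fintype Q] (hq : 3 ≤ Fintype.card Q)
    (C : Set (Fin m → Q)) (hmin : IsMinDist C 4)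
    (y : (Fin m → Q) ≃ (Fin m → Q)) (hy : IsHammingAut y)
    (hyN : y '' Nbrs C = Nbrs C) :
    y '' C = C := by
  obtain ⟨hmin1, a0, ha0, b0, hb0, hab0, hdab0⟩ := hmin
  set N := Nbrs C with hNdef
  -- the characterization of C in terms of N and distances
  have key : ∀ x : Fin m → Q, x ∈ C ↔ (x ∉ N ∧ ∀ ν, hammingDist x ν = 1 → ν ∈ N) := by
    intro x
    constructor
    · intro hx
      refine ⟨fun hxN => hxN.1 hx, fun ν hν => ⟨?_, x, hx, by rwa [hammingDist_comm]⟩⟩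
      intro hνC
      have hne : x ≠ ν := by
        intro h
        rw [h, hammingDist_self] at hν
        omega
      have := hmin1 x hx ν hνC hne
      omega
    · rintro ⟨hxN, hall⟩
      by_contra hxC
      -- m ≥ 4
      have hm4 : 4 ≤ m := by
        have := @hammingDist_le_card_fintype (Fin m) _ _ _ a0 b0
        rw [Fintype.card_fin] at this
        omega
      -- a first neighbour of x, giving a codeword α with d(x, α) = 2
      obtain ⟨c0, hc0, -⟩ := exists_third hq (x ⟨0, by omega⟩) (x ⟨0, by omega⟩)
      have hν0 := hall _ (hd_update x ⟨0, by omega⟩ hc0)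
      obtain ⟨-, α, hαC, hdν0α⟩ := hν0
      have hdxα : hammingDist x α = 2 := by
        have htri := hammingDist_triangle x (Function.update x ⟨0, by omega⟩ c0) α
        rw [hd_update x ⟨0, by omega⟩ hc0, hdν0α] at htri
        have hne0 : hammingDist x α ≠ 0 := by
          rw [hammingDist_ne_zero]
          intro h
          exact hxC (h ▸ hαC)
        have hne1 : hammingDist x α ≠ 1 := fun h => hxN ⟨hxC, α, hαC, h⟩
        omega
      obtain ⟨i, j, hij, hi, hj, hk⟩ := hd_two hdxα
      -- a neighbour μ of x differing in coordinate i, with a third value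
      obtain ⟨c, hcx, hcα⟩ := exists_third hq (x i) (α i)
      set μ := Function.update x i c with hμdef
      have hdxμ : hammingDist x μ = 1 := hd_update x i hcx
      have hdαμ : hammingDist α μ = 2 := by
        refine hd_pair hij ?_ ?_ ?_
        · rw [hμdef, Function.update_self]
          exact fun h => hcα h.symm
        · rw [hμdef, Function.update_of_ne (Ne.symm hij)]
          exact fun h => hj h.symm
        · intro k hki hkj
          rw [hμdef, Function.update_of_ne hki]
          exact (hk k hki hkj).symm
      obtain ⟨-, β, hβC, hdμβ⟩ := hall μ hdxμ
      -- d(α, β) ≤ 3, so α = β by minimum distance, contradiction with d(α,μ)=2, d(μ,β)=1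
      have htri := hammingDist_triangle α μ β
      rw [hdαμ, hdμβ] at htri
      rcases eq_or_ne α β with rfl | hne
      · rw [hammingDist_comm] at hdμβ
        omega
      · have := hmin1 α hαC β hβC hne
        omega
  -- membership in N is invariant under y
  have himg : ∀ v, v ∈ N ↔ y v ∈ N := by
    intro v
    conv_rhs => rw [← hyN]
    constructor
    · exact fun h => ⟨v, h, rfl⟩
    · rintro ⟨w, hw, he⟩
      rwa [← y.injective he]
  -- conclude
  ext v
  constructor
  · rintro ⟨w, hw, rfl⟩
    rw [key] at hw ⊢
    refine ⟨fun h => hw.1 ((himg w).mpr h), fun ν hν => ?_⟩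
    have hd : hammingDist w (y.symm ν) = 1 := by
      have := hy w (y.symm ν)
      rw [y.apply_symm_apply] at this
      rw [← this]
      exact hν
    have := hw.2 _ hd
    rw [himg (y.symm ν), y.apply_symm_apply] at this
    exact this
  · intro hv
    refine ⟨y.symm v, ?_, y.apply_symm_apply v⟩
    rw [key] at hv ⊢
    constructor
    · intro h
      rw [himg (y.symm v), y.apply_symm_apply] at h
      exact hv.1 h
    · intro ν hν
      have hd : hammingDist v (y ν) = 1 := by
        have := hy (y.symm v) ν
        rw [y.apply_symm_apply] at this
        rw [this]
        exact hν
      have := hv.2 _ hd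
      rwa [himg ν]
end

section
/- Let C be a code in H(m,q) with minimum distance δ ≥ 3, and let x be an automorphism of H(m,q) with x(Γ1(C)) = Γ1(C). Then at least one of the following holds: (1) x(C) = C; (2) δ = 4, q = 2 and m is even; (3) δ = 3 and m(q-1) is even. -/
open Set

variable {m : ℕ} {Q : Type*}

section Aux

variable [DecidableEq Q]

private lemma hd_def (a b : Fin m → Q) :
    hammingDist a b = (Finset.univ.filter fun i => a i ≠ b i).card := rfl

private lemma dist_update (π : Fin m → Q) (i : Fin m) (b : Q) (hb : b ≠ π i) :
    hammingDist π (Function.update π i b) = 1 := by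
  rw [hd_def, Finset.card_eq_one]
  refine ⟨i, ?_⟩
  ext j
  rcases eq_or_ne j i with rfl | hj
  · simp [Function.update, Ne.symm hb]
  · simp [Function.update, hj]

private lemma dist_one_iff {π ν : Fin m → Q} (h : hammingDist π ν = 1) :
    ∃ i, ν i ≠ π i ∧ ∀ j, j ≠ i → ν j = π j := by
  rw [hd_def, Finset.card_eq_one] at h
  obtain ⟨i, hi⟩ := h
  have hmem : ∀ j, (π j ≠ ν j) ↔ j = i := by
    intro j
    rw [← Finset.mem_singleton, ← hi, Finset.mem_filter]
    simp
  refine ⟨i, Ne.symm ((hmem i).mpr rfl), fun j hj => ?_⟩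
  by_contra hc
  exact hj ((hmem j).mp (Ne.symm hc))

private lemma dist_two {β π : Fin m → Q} (h : hammingDist β π = 2) :
    ∃ i j, i ≠ j ∧ β i ≠ π i ∧ β j ≠ π j ∧ ∀ k, k ≠ i → k ≠ j → β k = π k := by
  rw [hd_def, Finset.card_eq_two] at h
  obtain ⟨i, j, hij, hs⟩ := h
  have hmem : ∀ k, (β k ≠ π k) ↔ (k = i ∨ k = j) := by
    intro k
    have := Finset.ext_iff.mp hs k
    simpa using this
  refine ⟨i, j, hij, (hmem i).mpr (Or.inl rfl), (hmem j).mpr (Or.inr rfl), fun k h1 h2 => ?_⟩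
  by_contra hc
  rcases (hmem k).mp hc with rfl | rfl
  · exact h1 rfl
  · exact h2 rfl

private lemma update_dist_beta {β π : Fin m → Q} {i j : Fin m} (hij : i ≠ j)
    (hbj : β j ≠ π j) (hout : ∀ k, k ≠ i → k ≠ j → β k = π k) :
    hammingDist β (Function.update π i (β i)) = 1 := by
  rw [hd_def, Finset.card_eq_one]
  refine ⟨j, ?_⟩
  ext a
  simp only [Finset.mem_filter, Finset.mem_univ, true_and, Finset.mem_singleton]
  rcases eq_or_ne a i with rfl | hai
  · simp [hij]
  · rw [Function.update_of_ne hai]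
    rcases eq_or_ne a j with rfl | haj
    · simp [hbj]
    · simp [hout a hai haj, haj]

variable [Fintype Q]

private lemma common_card {β π : Fin m → Q} (h : hammingDist β π = 2) :
    (Finset.univ.filter fun ν => hammingDist π ν = 1 ∧ hammingDist β ν = 1).card = 2 := by
  obtain ⟨i, j, hij, hbi, hbj, hout⟩ := dist_two h
  have hout' : ∀ k, k ≠ j → k ≠ i → β k = π k := fun k h1 h2 => hout k h2 h1
  have key : (Finset.univ.filter fun ν => hammingDist π ν = 1 ∧ hammingDist β ν = 1)
      = {Function.update π i (β i), Function.update π j (β j)} := by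
    ext ν
    simp only [Finset.mem_filter, Finset.mem_univ, true_and, Finset.mem_insert,
      Finset.mem_singleton]
    constructor
    · rintro ⟨h1, h2⟩
      obtain ⟨k, hk, hkout⟩ := dist_one_iff h1
      obtain ⟨l, hl, hlout⟩ := dist_one_iff h2
      have hkij : k = i ∨ k = j := by
        by_contra hc
        push_neg at hc
        obtain ⟨hki, hkj⟩ := hc
        have hil : i = l := by
          by_contra hil
          have h3 : ν i = β i := hlout i hil
          rw [hkout i (Ne.symm hki)] at h3
          exact hbi h3.symm
        have hkl : k = l := by
          by_contra hkl
          have h4 : ν k = β k := hlout k hkl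
          rw [hout k hki hkj] at h4
          exact hk h4
        exact hki (hkl.trans hil.symm)
      rcases hkij with rfl | rfl
      · left
        have hjl : j = l := by
          by_contra hjl
          have h3 : ν j = β j := hlout j hjl
          rw [hkout j (Ne.symm hij)] at h3
          exact hbj h3.symm
        have hνk : ν k = β k := hlout k (fun e => hij (e.trans hjl.symm))
        funext a
        rcases eq_or_ne a k with rfl | hak
        · rw [hνk, Function.update_self]
        · rw [Function.update_of_ne hak, hkout a hak]
      · right
        have hjl : i = l := by
          by_contra hjl
          have h3 : ν i = β i := hlout i hjl
          rw [hkout i hij] at h3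
          exact hbi h3.symm
        have hνk : ν k = β k := hlout k (fun e => hij (hjl.trans e.symm))
        funext a
        rcases eq_or_ne a k with rfl | hak
        · rw [hνk, Function.update_self]
        · rw [Function.update_of_ne hak, hkout a hak]
    · rintro (rfl | rfl)
      · exact ⟨dist_update π i (β i) hbi, update_dist_beta hij hbj hout⟩
      · exact ⟨dist_update π j (β j) hbj, update_dist_beta (Ne.symm hij) hbi hout'⟩
  rw [key, Finset.card_insert_of_notMem, Finset.card_singleton]
  intro hmem
  rw [Finset.mem_singleton] at hmem
  have := congrFun hmem i
  rw [Function.update_self, Function.update_of_ne hij] at this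
  exact hbi this

private lemma sphere_card (π : Fin m → Q) :
    (Finset.univ.filter fun ν : Fin m → Q => hammingDist π ν = 1).card
      = m * (Fintype.card Q - 1) := by
  have := Finset.card_bij
    (s := (Finset.univ : Finset (Fin m)).sigma (fun i => Finset.univ.erase (π i)))
    (t := Finset.univ.filter fun ν : Fin m → Q => hammingDist π ν = 1)
    (fun p _ => Function.update π p.1 p.2) ?_ ?_ ?_
  · rw [← this]
    rw [Finset.card_sigma]
    simp [Finset.card_erase_of_mem, Finset.card_univ, Finset.sum_const, mul_comm]
  · rintro ⟨i, b⟩ hp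
    simp only [Finset.mem_sigma, Finset.mem_univ, Finset.mem_erase, true_and] at hp
    simp only [Finset.mem_filter, Finset.mem_univ, true_and]
    exact dist_update π i b hp.1
  · rintro ⟨i, b⟩ hp ⟨i', b'⟩ hp' heq
    simp only [Finset.mem_sigma, Finset.mem_univ, Finset.mem_erase, true_and] at hp hp'
    have hii' : i = i' := by
      by_contra hne
      have := congrFun heq i
      dsimp only at this
      rw [Function.update_self, Function.update_of_ne hne] at this
      exact hp.1 this
    subst hii'
    have := congrFun heq i
    dsimp only at this
    rw [Function.update_self, Function.update_self] at this
    subst this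
    rfl
  · intro ν hν
    simp only [Finset.mem_filter, Finset.mem_univ, true_and] at hν
    obtain ⟨i, hi, hiout⟩ := dist_one_iff hν
    refine ⟨⟨i, ν i⟩, by simp [Finset.mem_sigma, Finset.mem_erase, hi], ?_⟩
    funext a
    dsimp only
    rcases eq_or_ne a i with rfl | ha
    · rw [Function.update_self]
    · rw [Function.update_of_ne ha, hiout a ha]

/-- The key counting argument: if some codeword is mapped outside `C` by a
distance-preserving bijection stabilising `Γ₁(C)`, then the exceptional
conclusions hold. -/
private lemma key_lemma (C : Set (Fin m → Q)) (δ : ℕ)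
    (hmin : IsMinDist C δ) (hδ : 3 ≤ δ)
    (y : (Fin m → Q) ≃ (Fin m → Q)) (hy : IsHammingAut y)
    (hyN : y '' Nbrs C = Nbrs C)
    (α : Fin m → Q) (hα : α ∈ C) (hπC : y α ∉ C) :
    (δ = 4 ∧ Fintype.card Q = 2 ∧ Even m) ∨
    (δ = 3 ∧ Even (m * (Fintype.card Q - 1))) := by
  classical
  set π := y α with hπ
  have hαN : α ∉ Nbrs C := fun h => h.1 hα
  have hπN : π ∉ Nbrs C := by
    intro h
    rw [← hyN] at h
    obtain ⟨μ, hμ, he⟩ := h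
    exact hαN (y.injective he ▸ hμ)
  -- every neighbour of π is in Nbrs C
  have hNbr : ∀ ν, hammingDist π ν = 1 → ν ∈ Nbrs C := by
    intro ν h
    have hd : hammingDist α (y.symm ν) = 1 := by
      rw [← hy α (y.symm ν), ← hπ, y.apply_symm_apply]
      exact h
    have hne : α ≠ y.symm ν := by
      intro e
      rw [← e, hammingDist_self] at hd
      exact absurd hd (by norm_num)
    have hnc : y.symm ν ∉ C := by
      intro hc
      have := hmin.1 α hα (y.symm ν) hc hne
      omega
    have hmem : y.symm ν ∈ Nbrs C :=
      ⟨hnc, α, hα, by rw [hammingDist_comm]; exact hd⟩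
    rw [← hyN]
    exact ⟨y.symm ν, hmem, y.apply_symm_apply ν⟩
  -- uniqueness of the codeword at distance 1
  have huniq : ∀ (ν β β' : Fin m → Q), β ∈ C → β' ∈ C →
      hammingDist β ν = 1 → hammingDist β' ν = 1 → β = β' := by
    intro ν β β' hβ hβ' h1 h2
    by_contra hne
    have hmd := hmin.1 β hβ β' hβ' hne
    have tri := hammingDist_triangle β ν β'
    rw [hammingDist_comm ν β'] at tri
    omega
  -- the choice function
  set f : (Fin m → Q) → (Fin m → Q) :=
    fun ν => if h : ν ∈ Nbrs C then h.2.choose else ν with hf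
  have hfspec : ∀ ν ∈ Nbrs C, f ν ∈ C ∧ hammingDist ν (f ν) = 1 := by
    intro ν hν
    simp only [hf, dif_pos hν]
    exact ⟨hν.2.choose_spec.1, hν.2.choose_spec.2⟩
  set S : Finset (Fin m → Q) := Finset.univ.filter fun ν => hammingDist π ν = 1 with hS
  have hmemS : ∀ ν ∈ S, hammingDist π ν = 1 := by
    intro ν hν
    rw [hS, Finset.mem_filter] at hν
    exact hν.2
  have hfS : ∀ ν ∈ S, f ν ∈ C ∧ hammingDist ν (f ν) = 1 :=
    fun ν hν => hfspec ν (hNbr ν (hmemS ν hν))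
  have hfd2 : ∀ ν ∈ S, hammingDist (f ν) π = 2 := by
    intro ν hν
    have h1 := (hfS ν hν).1
    have h2 := (hfS ν hν).2
    have hle : hammingDist (f ν) π ≤ 2 := by
      have tri := hammingDist_triangle (f ν) ν π
      rw [hammingDist_comm (f ν) ν] at tri
      have := hmemS ν hν
      rw [hammingDist_comm π ν] at this
      omega
    have hne0 : hammingDist (f ν) π ≠ 0 := by
      intro h0
      exact hπC (hammingDist_eq_zero.mp h0 ▸ h1)
    have hne1 : hammingDist (f ν) π ≠ 1 := by
      intro h1'
      exact hπN ⟨hπC, f ν, h1, by rw [hammingDist_comm]; exact h1'⟩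
    omega
  set T : Finset (Fin m → Q) := S.image f with hT
  have hTmem : ∀ β ∈ T, β ∈ C ∧ hammingDist β π = 2 := by
    intro β hβ
    rw [hT, Finset.mem_image] at hβ
    obtain ⟨ν, hν, rfl⟩ := hβ
    exact ⟨(hfS ν hν).1, hfd2 ν hν⟩
  -- fibre decomposition
  have hsum : S.card = ∑ β ∈ T, (S.filter fun ν => f ν = β).card :=
    Finset.card_eq_sum_card_fiberwise (fun ν hν => Finset.mem_image_of_mem f hν)
  have hfiber : ∀ β ∈ T, (S.filter fun ν => f ν = β).card = 2 := by
    intro β hβ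
    have hβC := (hTmem β hβ).1
    have hβ2 := (hTmem β hβ).2
    have : (S.filter fun ν => f ν = β)
        = Finset.univ.filter fun ν => hammingDist π ν = 1 ∧ hammingDist β ν = 1 := by
      ext ν
      simp only [Finset.mem_filter, Finset.mem_univ, true_and, hS]
      constructor
      · rintro ⟨h1, h2⟩
        have hνS : ν ∈ S := by rw [hS, Finset.mem_filter]; exact ⟨Finset.mem_univ _, h1⟩
        refine ⟨h1, ?_⟩
        have := (hfS ν hνS).2
        rw [h2] at this
        rw [hammingDist_comm]
        exact this
      · rintro ⟨h1, h2⟩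
        have hνS : ν ∈ S := by rw [hS, Finset.mem_filter]; exact ⟨Finset.mem_univ _, h1⟩
        have hd := (hfS ν hνS).2
        rw [hammingDist_comm] at hd
        exact ⟨h1, huniq ν (f ν) β (hfS ν hνS).1 hβC hd h2⟩
    rw [this]
    exact common_card hβ2
  have hScard : S.card = m * (Fintype.card Q - 1) := sphere_card π
  have hS2T : m * (Fintype.card Q - 1) = 2 * T.card := by
    rw [← hScard, hsum, Finset.sum_congr rfl hfiber, Finset.sum_const, smul_eq_mul, mul_comm]
  have heven : Even (m * (Fintype.card Q - 1)) := ⟨T.card, by omega⟩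
  -- m ≥ 3 and card Q ≥ 2
  obtain ⟨a, ha, b, hb, hab, hdab⟩ := hmin.2
  have hm3 : 3 ≤ m := by
    have : hammingDist a b ≤ m := by
      rw [hd_def]
      calc (Finset.univ.filter fun i => a i ≠ b i).card ≤ Finset.univ.card :=
            Finset.card_filter_le _ _
        _ = m := by simp
    omega
  have hq2 : 2 ≤ Fintype.card Q := by
    obtain ⟨i, hi⟩ := Function.ne_iff.mp hab
    exact Fintype.one_lt_card_iff_nontrivial.mpr ⟨a i, b i, hi⟩
  -- |T| ≥ 2, hence δ ≤ 4
  have hT2 : 2 ≤ T.card := by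
    have h1 : 3 * 1 ≤ m * (Fintype.card Q - 1) := Nat.mul_le_mul hm3 (by omega)
    omega
  obtain ⟨β, hβ, β', hβ', hββ'⟩ := Finset.one_lt_card.mp hT2
  have hδ4 : δ ≤ 4 := by
    have h1 := (hTmem β hβ).2
    have h2 := (hTmem β' hβ').2
    have hmd := hmin.1 β (hTmem β hβ).1 β' (hTmem β' hβ').1 hββ'
    have tri := hammingDist_triangle β π β'
    rw [hammingDist_comm π β'] at tri
    omega
  have hδ34 : δ = 3 ∨ δ = 4 := by omega
  rcases hδ34 with rfl | rfl
  · exact Or.inr ⟨rfl, heven⟩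
  · -- δ = 4 : disjoint supports
    left
    refine ⟨rfl, ?_⟩
    set supp : (Fin m → Q) → Finset (Fin m) :=
      fun β => Finset.univ.filter fun i => β i ≠ π i with hsupp
    have hsupp2 : ∀ β ∈ T, (supp β).card = 2 := by
      intro β hβ
      have := (hTmem β hβ).2
      rw [hd_def] at this
      exact this
    have hdisj : ∀ β₁ ∈ T, ∀ β₂ ∈ T, β₁ ≠ β₂ → Disjoint (supp β₁) (supp β₂) := by
      intro β₁ h₁ β₂ h₂ hne
      rw [Finset.disjoint_left]
      intro i hi₁ hi₂
      have hsub : (Finset.univ.filter fun k => β₁ k ≠ β₂ k) ⊆ supp β₁ ∪ supp β₂ := by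
        intro k hk
        simp only [Finset.mem_filter, Finset.mem_univ, true_and] at hk
        rw [Finset.mem_union, hsupp]
        simp only [Finset.mem_filter, Finset.mem_univ, true_and]
        by_contra hc
        push_neg at hc
        exact hk (hc.1.trans hc.2.symm)
      have hinter : 1 ≤ (supp β₁ ∩ supp β₂).card :=
        Finset.card_pos.mpr ⟨i, Finset.mem_inter.mpr ⟨hi₁, hi₂⟩⟩
      have hcardu := Finset.card_union_add_card_inter (supp β₁) (supp β₂)
      have hdle : hammingDist β₁ β₂ ≤ (supp β₁ ∪ supp β₂).card := by
        rw [hd_def]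
        exact Finset.card_le_card hsub
      have hmd := hmin.1 β₁ (hTmem β₁ h₁).1 β₂ (hTmem β₂ h₂).1 hne
      have hc₁ := hsupp2 β₁ h₁
      have hc₂ := hsupp2 β₂ h₂
      omega
    have hbiU : (T.biUnion supp).card = ∑ β ∈ T, (supp β).card :=
      Finset.card_biUnion hdisj
    have hle : (T.biUnion supp).card ≤ m := by
      calc (T.biUnion supp).card ≤ (Finset.univ : Finset (Fin m)).card :=
            Finset.card_le_card (Finset.subset_univ _)
        _ = m := by simp
    have h2T : 2 * T.card ≤ m := by
      have hsumsupp : ∑ β ∈ T, (supp β).card = 2 * T.card := by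
        rw [Finset.sum_congr rfl hsupp2, Finset.sum_const, smul_eq_mul, mul_comm]
      omega
    -- q = 2
    have hq : Fintype.card Q = 2 := by
      by_contra hc
      have h3 : 2 ≤ Fintype.card Q - 1 := by omega
      have : m * 2 ≤ m * (Fintype.card Q - 1) := Nat.mul_le_mul_left m h3
      omega
    refine ⟨hq, ?_⟩
    have : m * (Fintype.card Q - 1) = m := by rw [hq]; simp
    exact ⟨T.card, by omega⟩

end Aux

/-- trichotomy for an automorphism stabilising the neighbour set
of a code of minimum distance `δ ≥ 3`. -/
theorem stmt_14 [DecidableEq Q] [Fintype Q] (q : ℕ) (hq : Fintype.card Q = q)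
    (C : Set (Fin m → Q)) (δ : ℕ)
    (hmin : IsMinDist C δ) (hδ : 3 ≤ δ)
    (x : (Fin m → Q) ≃ (Fin m → Q)) (hx : IsHammingAut x)
    (hxN : x '' Nbrs C = Nbrs C) :
    x '' C = C ∨
    (δ = 4 ∧ q = 2 ∧ Even m) ∨
    (δ = 3 ∧ Even (m * (q - 1))) := by
  subst hq
  by_cases h1 : ∀ a ∈ C, x a ∈ C
  · by_cases h2 : ∀ a ∈ C, x.symm a ∈ C
    · left
      ext ν
      constructor
      · rintro ⟨a, ha, rfl⟩
        exact h1 a ha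
      · intro hν
        exact ⟨x.symm ν, h2 ν hν, x.apply_symm_apply ν⟩
    · push_neg at h2
      obtain ⟨a, ha, hna⟩ := h2
      have hy : IsHammingAut x.symm := by
        intro u v
        conv_rhs => rw [← x.apply_symm_apply u, ← x.apply_symm_apply v]
        exact (hx _ _).symm
      have hyN : x.symm '' Nbrs C = Nbrs C := by
        conv_lhs => rw [← hxN]
        exact x.symm_image_image _
      exact Or.inr (key_lemma C δ hmin hδ x.symm hy hyN a ha hna)
  · push_neg at h1
    obtain ⟨a, ha, hna⟩ := h1
    exact Or.inr (key_lemma C δ hmin hδ x hx hxN a ha hna)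
end
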